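/- Let d ≥ 2, N ≥ 2, L ≥ 1 and 0 < β ≤ 10^{−6d}. Then for every edge e ∈ E⁺_Λ, every Q ∈ SU(N)^{E⁺_Λ}, and every X ∈ su(N) with Frobenius norm |X|_F ≤ 1: |(d/dt)|_{t=0} S̃(Q^{e,t,X})| ≤ N^{3/2}, where Q^{e,t,X} agrees with Q except that Q_e is replaced by e^{tX}Q_e. Equivalently, the Riemannian gradient of S̃ in the edge-e variable satisfies |∇_e S̃(Q)| ≤ N^{3/2} for all Q. -/

import Mathlib

open MeasureTheory Matrix Complex
noncomputable section

namespace YM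

/-! ## The lattice -/

/-- Vertices of `ℤ^d`. -/
abbrev Vtx (d : ℕ) := Fin d → ℤ

/-- Positively oriented edges of `ℤ^d`: `(x, i)` is the edge from `x` to `x + eᵢ`. -/
abbrev EdgeZ (d : ℕ) := Vtx d × Fin d

/-- Plaquettes of `ℤ^d`: `(x, i, j)` (with `i < j`) is the unit square with corners
`x, x+eᵢ, x+eᵢ+eⱼ, x+eⱼ`, traversed in that (positively oriented) order. -/
abbrev PlaqZ (d : ℕ) := Vtx d × Fin d × Fin d

/-- The `i`-th standard basis vector of `ℤ^d`. -/
def unitVec (d : ℕ) (i : Fin d) : Vtx d := fun k => if k = i then 1 else 0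

/-- The vertices of the box `Λ_L = ([-L,L] ∩ ℤ)^d`. -/
def vtxBox (d L : ℕ) : Finset (Vtx d) :=
  Finset.Icc (fun _ => -(L : ℤ)) (fun _ => (L : ℤ))

/-- The positively oriented edges `E⁺_Λ` of the box `Λ_L`. -/
def edgeBox (d L : ℕ) : Finset (EdgeZ d) :=
  (vtxBox d L ×ˢ Finset.univ).filter (fun e => e.1 + unitVec d e.2 ∈ vtxBox d L)

/-- First edge `(x, x+eᵢ)` of the plaquette `p = (x,i,j)`. -/
def pE1 (d : ℕ) (p : PlaqZ d) : EdgeZ d := (p.1, p.2.1)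
/-- Second edge `(x+eᵢ, x+eᵢ+eⱼ)` of the plaquette `p = (x,i,j)`. -/
def pE2 (d : ℕ) (p : PlaqZ d) : EdgeZ d := (p.1 + unitVec d p.2.1, p.2.2)
/-- Third edge `(x+eⱼ, x+eᵢ+eⱼ)` (traversed backwards) of the plaquette `p = (x,i,j)`. -/
def pE3 (d : ℕ) (p : PlaqZ d) : EdgeZ d := (p.1 + unitVec d p.2.2, p.2.1)
/-- Fourth edge `(x, x+eⱼ)` (traversed backwards) of the plaquette `p = (x,i,j)`. -/
def pE4 (d : ℕ) (p : PlaqZ d) : EdgeZ d := (p.1, p.2.2)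

/-- The positively oriented plaquettes `𝒫⁺_Λ` of the box `Λ_L`. -/
def plaqBox (d L : ℕ) : Finset (PlaqZ d) :=
  (vtxBox d L ×ˢ (Finset.univ ×ˢ Finset.univ)).filter
    (fun p => p.2.1 < p.2.2 ∧ pE1 d p ∈ edgeBox d L ∧ pE2 d p ∈ edgeBox d L ∧
      pE3 d p ∈ edgeBox d L ∧ pE4 d p ∈ edgeBox d L)

/-- Orientation sign `sgn(e,p)`. -/
def sgn (d : ℕ) (e : EdgeZ d) (p : PlaqZ d) : ℤ :=
  (if e = pE1 d p then 1 else 0) + (if e = pE2 d p then 1 else 0)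
    - (if e = pE3 d p then 1 else 0) - (if e = pE4 d p then 1 else 0)

/-! ## Graph distance -/

/-- Graph (ℓ¹) distance between two vertices of `ℤ^d`, as a real number. -/
def vDist {d : ℕ} (x y : Vtx d) : ℝ := ∑ k, |((x k - y k : ℤ) : ℝ)|

/-- Graph distance between two edges (minimum over their endpoints). -/
def eDist {d : ℕ} (e f : EdgeZ d) : ℝ :=
  min (min (vDist e.1 f.1) (vDist e.1 (f.1 + unitVec d f.2)))
      (min (vDist (e.1 + unitVec d e.2) f.1) (vDist (e.1 + unitVec d e.2) (f.1 + unitVec d f.2)))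

/-- Graph distance between two finite edge sets. -/
def fDist {d : ℕ} (A B : Finset (EdgeZ d)) : ℝ :=
  sInf ((fun q : EdgeZ d × EdgeZ d => eDist q.1 q.2) ''
    ((A ×ˢ B : Finset (EdgeZ d × EdgeZ d)) : Set (EdgeZ d × EdgeZ d)))

/-! ## The groups `U(N)`, `SU(N)` and the Lie algebra `su(N)` -/

/-- The unitary group `U(N)`. -/
abbrev UN (N : ℕ) := Matrix.unitaryGroup (Fin N) ℂ
/-- The special unitary group `SU(N)`. -/
abbrev SUN (N : ℕ) := Matrix.specialUnitaryGroup (Fin N) ℂ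

instance (N : ℕ) : MeasurableSpace (UN N) := borel _
instance (N : ℕ) : BorelSpace (UN N) := ⟨rfl⟩
instance (N : ℕ) : MeasurableSpace (SUN N) := borel _
instance (N : ℕ) : BorelSpace (SUN N) := ⟨rfl⟩

/-- A Haar probability measure: a left-translation invariant Borel probability measure. -/
def IsHaarProb {G : Type*} [Mul G] [MeasurableSpace G] (ν : Measure G) : Prop :=
  IsProbabilityMeasure ν ∧ ∀ g : G, Measure.map (fun x => g * x) ν = ν

/-- Matrix exponential, via its power series. -/
def mexp {N : ℕ} (X : Matrix (Fin N) (Fin N) ℂ) : Matrix (Fin N) (Fin N) ℂ :=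
  ∑' k : ℕ, ((k.factorial : ℂ)⁻¹) • X ^ k

/-- Exponential of a matrix, as an element of `SU(N)`.  (When `X ∈ su(N)` — the only case in
which this is ever used — `mexp X` lies in `SU(N)`, so the `dite` takes its first branch.) -/
def expSU {N : ℕ} (X : Matrix (Fin N) (Fin N) ℂ) : SUN N :=
  @dite _ (mexp X ∈ Matrix.specialUnitaryGroup (Fin N) ℂ) (Classical.dec _)
    (fun h => ⟨mexp X, h⟩) (fun _ => 1)

/-- `X` belongs to the Lie algebra `su(N)`: traceless and skew-Hermitian. -/
def MemSU {N : ℕ} (X : Matrix (Fin N) (Fin N) ℂ) : Prop := Xᴴ = -X ∧ X.trace = 0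

/-- Squared Frobenius (Hilbert–Schmidt) norm `|X|² = Re Tr (X X*)`. -/
def frobSq {N : ℕ} (X : Matrix (Fin N) (Fin N) ℂ) : ℝ := ((X * Xᴴ).trace).re

/-- `B : Fin m → su(N)` is an orthonormal basis of `su(N)` (orthonormality together with the
correct cardinality `m = N² − 1 = dim_ℝ su(N)`). -/
def IsONBasisSU (N m : ℕ) (B : Fin m → Matrix (Fin N) (Fin N) ℂ) : Prop :=
  m = N ^ 2 - 1 ∧ (∀ i, MemSU (B i)) ∧
    ∀ i j, (((B i) * (B j)ᴴ).trace).re = if i = j then 1 else 0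

/-! ## Configurations and the coupled `U(1) × SU(N)` measure -/

/-- Finite-volume `SU(N)` configurations. -/
abbrev CfgS (d L N : ℕ) := ↥(edgeBox d L) → SUN N
/-- Finite-volume `U(1)`-angle configurations. -/
abbrev CfgT (d L : ℕ) := ↥(edgeBox d L) → ℝ

/-- Extension of an `SU(N)` configuration (as matrices) to all edges (by `1` off the box). -/
def extS {d L N : ℕ} (Q : CfgS d L N) : EdgeZ d → Matrix (Fin N) (Fin N) ℂ :=
  fun e => if h : e ∈ edgeBox d L then (Q ⟨e, h⟩ : Matrix (Fin N) (Fin N) ℂ) else 1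

/-- Extension of an angle configuration to all edges (by `0` off the box). -/
def extT {d L : ℕ} (θ : CfgT d L) : EdgeZ d → ℝ :=
  fun e => if h : e ∈ edgeBox d L then θ ⟨e, h⟩ else 0

/-- Plaquette variable `Q_p = Q_{e₁} Q_{e₂} Q_{e₃}⁻¹ Q_{e₄}⁻¹` (for unitary matrices the
inverse is the conjugate transpose `star`). -/
def plaqMat {d N : ℕ} (Q : EdgeZ d → Matrix (Fin N) (Fin N) ℂ) (p : PlaqZ d) :
    Matrix (Fin N) (Fin N) ℂ :=
  Q (pE1 d p) * Q (pE2 d p) * star (Q (pE3 d p)) * star (Q (pE4 d p))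

/-- `θ_p = Σ_{e ∈ E⁺_Λ} sgn(e,p) θ_e`. -/
def thetaP {d L : ℕ} (θ : CfgT d L) (p : PlaqZ d) : ℝ :=
  ∑ e ∈ edgeBox d L, (sgn d e p : ℝ) * extT θ e

/-- The coupled action `S_𝒰(θ,Q) = Nβ Σ_{p ∈ 𝒫⁺_Λ} Re(e^{iθ_p/N} Tr(Q_p))`. -/
def actionC (d L N : ℕ) (β : ℝ) (θ : CfgT d L) (Q : CfgS d L N) : ℝ :=
  ∑ p ∈ plaqBox d L, (N : ℝ) * β *
    (Complex.exp (Complex.I * (thetaP θ p) / N) * (plaqMat (extS Q) p).trace).re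

/-- Lebesgue measure on `[0,2π)^{E⁺_Λ}`. -/
def lebTheta (d L : ℕ) : Measure (CfgT d L) :=
  Measure.pi fun _ => volume.restrict (Set.Ico 0 (2 * Real.pi))

/-- Product Haar measure on `SU(N)` configurations. -/
def piHaarS (d L N : ℕ) (ν : Measure (SUN N)) : Measure (CfgS d L N) :=
  Measure.pi fun _ => ν

/-- The conditional expectation `E[f | Q = Q']` (the `U(1)` field averaged with density
`exp(S_𝒰(·,Q'))`, the `SU(N)` field frozen at `Q'`). -/
def condE (d L N : ℕ) (β : ℝ) (f : CfgT d L → CfgS d L N → ℝ) (Q' : CfgS d L N) : ℝ :=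
  (∫ θ, f θ Q' * Real.exp (actionC d L N β θ Q') ∂(lebTheta d L)) /
    (∫ θ, Real.exp (actionC d L N β θ Q') ∂(lebTheta d L))

/-- Conditional covariance `Cov(f,g | Q = Q')`. -/
def condCov (d L N : ℕ) (β : ℝ) (f g : CfgT d L → CfgS d L N → ℝ) (Q' : CfgS d L N) : ℝ :=
  condE d L N β (fun θ Q => f θ Q * g θ Q) Q' - condE d L N β f Q' * condE d L N β g Q'

/-- The marginal action `S̃(Q) = log ∫ e^{S_𝒰(θ,Q)} dθ`. -/
def actionTilde (d L N : ℕ) (β : ℝ) (Q : CfgS d L N) : ℝ :=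
  Real.log (∫ θ, Real.exp (actionC d L N β θ Q) ∂(lebTheta d L))

/-- The marginal measure `μ̃_{SU(N),Λ,β}` on `SU(N)^{E⁺_Λ}`, with density proportional to
`exp(S̃(Q))` with respect to the product Haar measure. -/
def marginalMeasure (d L N : ℕ) (β : ℝ) (ν : Measure (SUN N)) : Measure (CfgS d L N) :=
  ((∫⁻ Q, ENNReal.ofReal (Real.exp (actionTilde d L N β Q)) ∂(piHaarS d L N ν))⁻¹) •
    (piHaarS d L N ν).withDensity
      (fun Q => ENNReal.ofReal (Real.exp (actionTilde d L N β Q)))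

/-! ## Observables -/

/-- Sup norm `‖f‖_{L^∞}` of a real-valued function. -/
def supNorm {α : Type*} (f : α → ℝ) : ℝ := ⨆ x, |f x|

/-- Sup norm for a two-variable observable. -/
def supNorm2 {α β : Type*} (f : α → β → ℝ) : ℝ := ⨆ w : α × β, |f w.1 w.2|

/-- A local observable on `[0,2π)^{E⁺_Λ} × SU(N)^{E⁺_Λ}` with support `Λf`: it depends only
on the variables `(θ_e, Q_e)` with `e ∈ Λf`. -/
def IsLocal2 {d L N : ℕ} (Λf : Finset (EdgeZ d)) (f : CfgT d L → CfgS d L N → ℝ) : Prop :=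
  ∀ θ θ' Q Q', (∀ e : ↥(edgeBox d L), (e : EdgeZ d) ∈ Λf → θ e = θ' e ∧ Q e = Q' e) →
    f θ Q = f θ' Q'

/-- A local observable on `SU(N)^{E⁺_Λ}` with support `Λf`. -/
def IsLocalS {d L N : ℕ} (Λf : Finset (EdgeZ d)) (f : CfgS d L N → ℝ) : Prop :=
  ∀ Q Q' : CfgS d L N, (∀ e : ↥(edgeBox d L), (e : EdgeZ d) ∈ Λf → Q e = Q' e) → f Q = f Q'

/-- The configuration `Q` with `Q_e` replaced by `e^{tX} Q_e`. -/
def pertS {d L N : ℕ} (e : ↥(edgeBox d L)) (X : Matrix (Fin N) (Fin N) ℂ) (t : ℝ)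
    (Q : CfgS d L N) : CfgS d L N :=
  Function.update Q e (expSU (t • X) * Q e)

/-- Smoothness of an observable on `SU(N)^{E⁺_Λ}`: continuity together with smoothness of
all the one-parameter perturbations along `su(N)` directions. -/
def SmoothS {d L N : ℕ} (f : CfgS d L N → ℝ) : Prop :=
  Continuous f ∧ ∀ (e : ↥(edgeBox d L)) (X : Matrix (Fin N) (Fin N) ℂ) (Q : CfgS d L N),
    MemSU X → ContDiff ℝ (⊤ : ℕ∞) (fun t : ℝ => f (pertS e X t Q))

/-- Smoothness of a two-variable observable: joint continuity, smoothness in the `θ`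
variable, and smoothness along `su(N)` directions of the `Q` variable. -/
def Smooth2 {d L N : ℕ} (f : CfgT d L → CfgS d L N → ℝ) : Prop :=
  Continuous (fun w : CfgT d L × CfgS d L N => f w.1 w.2) ∧
    (∀ Q, ContDiff ℝ (⊤ : ℕ∞) (fun θ => f θ Q)) ∧
    ∀ (θ : CfgT d L) (e : ↥(edgeBox d L)) (X : Matrix (Fin N) (Fin N) ℂ) (Q : CfgS d L N),
      MemSU X → ContDiff ℝ (⊤ : ℕ∞) (fun t : ℝ => f θ (pertS e X t Q))

/-- `|∇_e f(Q)|²`, computed in the orthonormal frame `B` of `su(N)`. -/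
def gradSqS {d L N m : ℕ} (B : Fin m → Matrix (Fin N) (Fin N) ℂ) (f : CfgS d L N → ℝ)
    (e : ↥(edgeBox d L)) (Q : CfgS d L N) : ℝ :=
  ∑ i : Fin m, (deriv (fun t : ℝ => f (pertS e (B i) t Q)) 0) ^ 2

/-- The norm `⦀f⦀_∞ = Σ_{e ∈ Λf} sup_Q |∇_e f(Q)|`. -/
def tripNormS {d L N m : ℕ} (B : Fin m → Matrix (Fin N) (Fin N) ℂ)
    (Λf : Finset (EdgeZ d)) (f : CfgS d L N → ℝ) : ℝ :=
  ∑ e : ↥(edgeBox d L),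
    if (e : EdgeZ d) ∈ Λf then ⨆ Q, Real.sqrt (gradSqS B f e Q) else 0

/-- Covariance of two observables. -/
def cov {α : Type*} [MeasurableSpace α] (μ : Measure α) (f g : α → ℝ) : ℝ :=
  ∫ x, f x * g x ∂μ - (∫ x, f x ∂μ) * (∫ x, g x ∂μ)

end YM

namespace YM


/-! ### Auxiliary lemmas for Statement 14 -/

section Stmt14Aux

attribute [local instance] Matrix.frobeniusSeminormedAddCommGroup
  Matrix.frobeniusNormedAddCommGroup Matrix.frobeniusNormedSpace
  Matrix.frobeniusNormedRing Matrix.frobeniusNormedAlgebra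

variable {N : ℕ}

lemma frob_norm_eq (A : Matrix (Fin N) (Fin N) ℂ) :
    ‖A‖ = Real.sqrt (∑ i, ∑ j, ‖A i j‖ ^ 2) := by
  rw [Matrix.frobenius_norm_def, Real.sqrt_eq_rpow]
  norm_num

lemma frobSq_eq (A : Matrix (Fin N) (Fin N) ℂ) :
    frobSq A = ∑ i, ∑ j, ‖A i j‖ ^ 2 := by
  simp only [frobSq, Matrix.trace, Matrix.diag, Matrix.mul_apply, Matrix.conjTranspose_apply]
  rw [Complex.re_sum]
  refine Finset.sum_congr rfl fun i _ => ?_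
  rw [Complex.re_sum]
  refine Finset.sum_congr rfl fun j _ => ?_
  rw [show star (A i j) = (starRingEnd ℂ) (A i j) from rfl, Complex.mul_conj,
    Complex.normSq_eq_norm_sq]
  norm_cast

lemma sqrt_frobSq_eq_norm (A : Matrix (Fin N) (Fin N) ℂ) :
    Real.sqrt (frobSq A) = ‖A‖ := by
  rw [frobSq_eq, frob_norm_eq]

lemma norm_unitary {U : Matrix (Fin N) (Fin N) ℂ} (hU : U ∈ Matrix.unitaryGroup (Fin N) ℂ) :
    ‖U‖ = Real.sqrt N := by
  rw [← sqrt_frobSq_eq_norm]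
  congr 1
  have h : U * Uᴴ = 1 := by
    rw [← Matrix.star_eq_conjTranspose]
    exact (Matrix.mem_unitaryGroup_iff).mp hU
  rw [frobSq, h, Matrix.trace_one]
  simp

lemma abs_trace_mul_le (P M : Matrix (Fin N) (Fin N) ℂ) :
    ‖(P * M).trace‖ ≤ ‖P‖ * ‖M‖ := by
  have h1 : ‖(P * M).trace‖ ≤ ∑ i, ∑ j, ‖P i j‖ * ‖M j i‖ := by
    simp only [Matrix.trace, Matrix.diag, Matrix.mul_apply]
    calc ‖∑ i, ∑ j, P i j * M j i‖
        ≤ ∑ i, ‖∑ j, P i j * M j i‖ := norm_sum_le _ _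
      _ ≤ ∑ i, ∑ j, ‖P i j‖ * ‖M j i‖ := by
          refine Finset.sum_le_sum fun i _ => ?_
          refine (norm_sum_le _ _).trans (Finset.sum_le_sum fun j _ => ?_)
          rw [norm_mul]
  refine h1.trans ?_
  have h2 : (∑ ij : Fin N × Fin N, ‖P ij.1 ij.2‖ * ‖M ij.2 ij.1‖) ^ 2
      ≤ (∑ ij : Fin N × Fin N, ‖P ij.1 ij.2‖ ^ 2) * (∑ ij : Fin N × Fin N, ‖M ij.2 ij.1‖ ^ 2) :=
    Finset.sum_mul_sq_le_sq_mul_sq _ _ _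
  have e1 : (∑ ij : Fin N × Fin N, ‖P ij.1 ij.2‖ * ‖M ij.2 ij.1‖)
      = ∑ i, ∑ j, ‖P i j‖ * ‖M j i‖ := Fintype.sum_prod_type _
  have e2 : (∑ ij : Fin N × Fin N, ‖P ij.1 ij.2‖ ^ 2) = ∑ i, ∑ j, ‖P i j‖ ^ 2 :=
    Fintype.sum_prod_type _
  have e3 : (∑ ij : Fin N × Fin N, ‖M ij.2 ij.1‖ ^ 2) = ∑ i, ∑ j, ‖M i j‖ ^ 2 := by
    rw [Fintype.sum_prod_type]
    exact Finset.sum_comm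
  rw [e1, e2, e3] at h2
  have hnn : (0:ℝ) ≤ ∑ i, ∑ j, ‖P i j‖ * ‖M j i‖ :=
    Finset.sum_nonneg fun i _ => Finset.sum_nonneg fun j _ => by positivity
  rw [frob_norm_eq, frob_norm_eq, ← Real.sqrt_mul (by positivity), ← Real.sqrt_sq hnn]
  exact Real.sqrt_le_sqrt h2

lemma abs_trace_unitary_le (Z : Matrix (Fin N) (Fin N) ℂ) {W : Matrix (Fin N) (Fin N) ℂ}
    (hW : W ∈ Matrix.unitaryGroup (Fin N) ℂ) :
    ‖(Z * W).trace‖ ≤ ‖Z‖ * Real.sqrt N := by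
  rw [← norm_unitary hW]
  exact abs_trace_mul_le _ _

lemma mexp_eq_exp (X : Matrix (Fin N) (Fin N) ℂ) : mexp X = NormedSpace.exp X := by
  rw [NormedSpace.exp_eq_tsum ℂ]; rfl

lemma norm_mexp_sub_one_le (Y : Matrix (Fin N) (Fin N) ℂ) :
    ‖mexp Y - 1‖ ≤ ‖Y‖ * Real.exp ‖Y‖ := by
  have hsum : Summable fun k : ℕ => ((k.factorial : ℂ)⁻¹) • Y ^ k :=
    NormedSpace.expSeries_summable' Y
  have h0 : mexp Y = 1 + ∑' k : ℕ, (((k+1).factorial : ℂ)⁻¹) • Y ^ (k+1) := by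
    rw [mexp, hsum.tsum_eq_zero_add]
    simp
  rw [h0, add_sub_cancel_left]
  have hb : ∀ k : ℕ, ‖(((k+1).factorial : ℂ)⁻¹) • Y ^ (k+1)‖
      ≤ ‖Y‖ * (‖Y‖ ^ k / k.factorial) := by
    intro k
    rw [norm_smul]
    have h1 : ‖(((k+1).factorial : ℂ)⁻¹)‖ = (((k+1).factorial : ℝ))⁻¹ := by
      rw [norm_inv, Complex.norm_natCast]
    rw [h1]
    have h2 : ‖Y ^ (k+1)‖ ≤ ‖Y‖ ^ (k+1) := norm_pow_le' Y k.succ_pos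
    have h3 : (((k+1).factorial : ℝ))⁻¹ ≤ ((k.factorial : ℝ))⁻¹ := by
      apply inv_anti₀
      · exact_mod_cast k.factorial_pos
      · exact_mod_cast Nat.factorial_le (Nat.le_succ k)
    calc (((k+1).factorial : ℝ))⁻¹ * ‖Y ^ (k+1)‖
        ≤ ((k.factorial : ℝ))⁻¹ * ‖Y‖ ^ (k+1) := by
          apply mul_le_mul h3 h2 (norm_nonneg _) (by positivity)
      _ = ‖Y‖ * (‖Y‖ ^ k / k.factorial) := by ring
  have hsum2 : Summable fun k : ℕ => ‖Y‖ * (‖Y‖ ^ k / k.factorial) :=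
    (Real.summable_pow_div_factorial ‖Y‖).mul_left _
  calc ‖∑' k : ℕ, (((k+1).factorial : ℂ)⁻¹) • Y ^ (k+1)‖
      ≤ ∑' k : ℕ, ‖Y‖ * (‖Y‖ ^ k / k.factorial) := tsum_of_norm_bounded hsum2.hasSum hb
    _ = ‖Y‖ * Real.exp ‖Y‖ := by
        rw [tsum_mul_left, Real.exp_eq_exp_ℝ, NormedSpace.exp_eq_tsum_div]

lemma mexp_zero : (mexp (0 : Matrix (Fin N) (Fin N) ℂ)) = 1 := by
  rw [mexp_eq_exp, NormedSpace.exp_zero]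

lemma norm_expSU_sub_one_le (Y : Matrix (Fin N) (Fin N) ℂ) :
    ‖((expSU Y : SUN N) : Matrix (Fin N) (Fin N) ℂ) - 1‖ ≤ ‖Y‖ * Real.exp ‖Y‖ := by
  unfold expSU
  split
  · exact norm_mexp_sub_one_le Y
  · rw [OneMemClass.coe_one, sub_self, norm_zero]
    positivity

lemma expSU_zero : (expSU (0 : Matrix (Fin N) (Fin N) ℂ)) = (1 : SUN N) := by
  apply Subtype.ext
  unfold expSU
  rw [dif_pos]
  · exact mexp_zero
  · rw [mexp_zero]; exact Submonoid.one_mem _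

lemma SUN_coe_mem_unitary (g : SUN N) :
    (g : Matrix (Fin N) (Fin N) ℂ) ∈ Matrix.unitaryGroup (Fin N) ℂ :=
  (Matrix.mem_specialUnitaryGroup_iff.mp g.2).1

/-- The key algebraic estimate: perturbing some of the four factors of a plaquette product
by a unitary `E` changes the trace by at most (number of perturbed factors)·‖E-1‖·√N. -/
lemma trace_plaq_pert_bound (E A B C D : Matrix (Fin N) (Fin N) ℂ)
    (hE : E ∈ Matrix.unitaryGroup (Fin N) ℂ) (hA : A ∈ Matrix.unitaryGroup (Fin N) ℂ)
    (hB : B ∈ Matrix.unitaryGroup (Fin N) ℂ) (hC : C ∈ Matrix.unitaryGroup (Fin N) ℂ)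
    (hD : D ∈ Matrix.unitaryGroup (Fin N) ℂ)
    (sA sB sC sD : Prop) [Decidable sA] [Decidable sB] [Decidable sC] [Decidable sD] :
    ‖(((if sA then E else 1) * A) * ((if sB then E else 1) * B) *
        ((if sC then E else 1) * C)ᴴ * ((if sD then E else 1) * D)ᴴ).trace
      - (A * B * Cᴴ * Dᴴ).trace‖
    ≤ ((if sA then 1 else 0) + (if sB then 1 else 0) + (if sC then 1 else 0)
        + (if sD then 1 else 0)) * (‖E - 1‖ * Real.sqrt N) := by
  set A' := (if sA then E else 1) * A with hA'
  set B' := (if sB then E else 1) * B with hB'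
  set C' := (if sC then E else 1) * C with hC'
  set D' := (if sD then E else 1) * D with hD'
  have huI : ∀ s : Prop, ∀ _ : Decidable s,
      (if s then E else 1) ∈ Matrix.unitaryGroup (Fin N) ℂ := by
    intro s hs
    split
    · exact hE
    · exact Submonoid.one_mem _
  have hA'u : A' ∈ Matrix.unitaryGroup (Fin N) ℂ := mul_mem (huI sA _) hA
  have hB'u : B' ∈ Matrix.unitaryGroup (Fin N) ℂ := mul_mem (huI sB _) hB
  have hC'u : C' ∈ Matrix.unitaryGroup (Fin N) ℂ := mul_mem (huI sC _) hC
  have hD'u : D' ∈ Matrix.unitaryGroup (Fin N) ℂ := mul_mem (huI sD _) hD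
  have hstar : ∀ {U : Matrix (Fin N) (Fin N) ℂ}, U ∈ Matrix.unitaryGroup (Fin N) ℂ →
      Uᴴ ∈ Matrix.unitaryGroup (Fin N) ℂ := by
    intro U hU
    rw [← Matrix.star_eq_conjTranspose]
    exact Unitary.star_mem hU
  -- telescoping identity
  have key : A' * B' * C'ᴴ * D'ᴴ - A * B * Cᴴ * Dᴴ
      = (A' - A) * (B' * (C'ᴴ * D'ᴴ)) + A * ((B' - B) * (C'ᴴ * D'ᴴ))
        + (A * B) * ((C'ᴴ - Cᴴ) * D'ᴴ) + ((A * B) * Cᴴ) * (D'ᴴ - Dᴴ) := by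
    noncomm_ring
  have habs : ∀ (s : Prop) (_ : Decidable s), ‖(if s then E else 1) - 1‖
      ≤ (if s then (1:ℝ) else 0) * ‖E - 1‖ := by
    intro s hs
    split <;> simp
  have t1 : ‖((A' - A) * (B' * (C'ᴴ * D'ᴴ))).trace‖
      ≤ (if sA then (1:ℝ) else 0) * (‖E - 1‖ * Real.sqrt N) := by
    have hAA : A' - A = ((if sA then E else 1) - 1) * A := by rw [hA', sub_mul, one_mul]
    rw [hAA, mul_assoc]
    refine (abs_trace_unitary_le _ (mul_mem hA (mul_mem hB'u
      (mul_mem (hstar hC'u) (hstar hD'u))))).trans ?_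
    rw [← mul_assoc]
    exact mul_le_mul_of_nonneg_right (habs sA _) (Real.sqrt_nonneg _)
  have t2 : ‖(A * ((B' - B) * (C'ᴴ * D'ᴴ))).trace‖
      ≤ (if sB then (1:ℝ) else 0) * (‖E - 1‖ * Real.sqrt N) := by
    have hBB : B' - B = ((if sB then E else 1) - 1) * B := by rw [hB', sub_mul, one_mul]
    rw [Matrix.trace_mul_comm, hBB, mul_assoc, mul_assoc]
    refine (abs_trace_unitary_le _ (mul_mem hB (mul_mem (mul_mem (hstar hC'u)
      (hstar hD'u)) hA))).trans ?_
    rw [← mul_assoc]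
    exact mul_le_mul_of_nonneg_right (habs sB _) (Real.sqrt_nonneg _)
  have t3 : ‖((A * B) * ((C'ᴴ - Cᴴ) * D'ᴴ)).trace‖
      ≤ (if sC then (1:ℝ) else 0) * (‖E - 1‖ * Real.sqrt N) := by
    have hCC : C'ᴴ - Cᴴ = Cᴴ * ((if sC then E else 1) - 1)ᴴ := by
      rw [hC', Matrix.conjTranspose_mul, Matrix.conjTranspose_sub, Matrix.conjTranspose_one,
        Matrix.mul_sub, Matrix.mul_one]
    rw [hCC]
    have e : ((A * B) * ((Cᴴ * ((if sC then E else 1) - 1)ᴴ) * D'ᴴ)).trace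
        = ((((if sC then E else 1) - 1)ᴴ) * ((D'ᴴ * (A * B)) * Cᴴ)).trace := by
      rw [show (A * B) * ((Cᴴ * ((if sC then E else 1) - 1)ᴴ) * D'ᴴ)
          = ((A * B) * Cᴴ) * ((((if sC then E else 1) - 1)ᴴ) * D'ᴴ) by noncomm_ring]
      rw [Matrix.trace_mul_comm]
      congr 1
      noncomm_ring
    rw [e]
    refine (abs_trace_unitary_le _ (mul_mem (mul_mem (hstar hD'u) (mul_mem hA hB))
      (hstar hC))).trans ?_
    rw [Matrix.frobenius_norm_conjTranspose, ← mul_assoc]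
    exact mul_le_mul_of_nonneg_right (habs sC _) (Real.sqrt_nonneg _)
  have t4 : ‖(((A * B) * Cᴴ) * (D'ᴴ - Dᴴ)).trace‖
      ≤ (if sD then (1:ℝ) else 0) * (‖E - 1‖ * Real.sqrt N) := by
    have hDD : D'ᴴ - Dᴴ = Dᴴ * ((if sD then E else 1) - 1)ᴴ := by
      rw [hD', Matrix.conjTranspose_mul, Matrix.conjTranspose_sub, Matrix.conjTranspose_one,
        Matrix.mul_sub, Matrix.mul_one]
    rw [hDD]
    have e : (((A * B) * Cᴴ) * (Dᴴ * ((if sD then E else 1) - 1)ᴴ)).trace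
        = ((((if sD then E else 1) - 1)ᴴ) * ((((A * B) * Cᴴ) * Dᴴ))).trace := by
      rw [show ((A * B) * Cᴴ) * (Dᴴ * ((if sD then E else 1) - 1)ᴴ)
          = (((A * B) * Cᴴ) * Dᴴ) * (((if sD then E else 1) - 1)ᴴ) by noncomm_ring]
      exact Matrix.trace_mul_comm _ _
    rw [e]
    refine (abs_trace_unitary_le _ (mul_mem (mul_mem (mul_mem hA hB) (hstar hC))
      (hstar hD))).trans ?_
    rw [Matrix.frobenius_norm_conjTranspose, ← mul_assoc]
    exact mul_le_mul_of_nonneg_right (habs sD _) (Real.sqrt_nonneg _)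
  have hsum : (A' * B' * C'ᴴ * D'ᴴ).trace - (A * B * Cᴴ * Dᴴ).trace
      = ((A' - A) * (B' * (C'ᴴ * D'ᴴ))).trace + (A * ((B' - B) * (C'ᴴ * D'ᴴ))).trace
        + ((A * B) * ((C'ᴴ - Cᴴ) * D'ᴴ)).trace + (((A * B) * Cᴴ) * (D'ᴴ - Dᴴ)).trace := by
    rw [← Matrix.trace_sub, key, Matrix.trace_add, Matrix.trace_add, Matrix.trace_add]
  rw [hsum]
  have habs4 : ‖((A' - A) * (B' * (C'ᴴ * D'ᴴ))).trace
        + (A * ((B' - B) * (C'ᴴ * D'ᴴ))).trace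
        + ((A * B) * ((C'ᴴ - Cᴴ) * D'ᴴ)).trace + (((A * B) * Cᴴ) * (D'ᴴ - Dᴴ)).trace‖
      ≤ ‖((A' - A) * (B' * (C'ᴴ * D'ᴴ))).trace‖
        + ‖(A * ((B' - B) * (C'ᴴ * D'ᴴ))).trace‖
        + ‖((A * B) * ((C'ᴴ - Cᴴ) * D'ᴴ)).trace‖
        + ‖(((A * B) * Cᴴ) * (D'ᴴ - Dᴴ)).trace‖ := by
    refine (norm_add_le _ _).trans (add_le_add ?_ le_rfl)
    refine (norm_add_le _ _).trans (add_le_add ?_ le_rfl)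
    exact norm_add_le _ _
  refine habs4.trans ?_
  have hnn : (0:ℝ) ≤ ‖E - 1‖ * Real.sqrt N := by positivity
  nlinarith [t1, t2, t3, t4]

end Stmt14Aux

section Stmt14Aux2

attribute [local instance] Matrix.frobeniusSeminormedAddCommGroup
  Matrix.frobeniusNormedAddCommGroup Matrix.frobeniusNormedSpace
  Matrix.frobeniusNormedRing Matrix.frobeniusNormedAlgebra

variable {d L N : ℕ}

lemma extS_mem_unitary (Q : CfgS d L N) (f : EdgeZ d) :
    extS Q f ∈ Matrix.unitaryGroup (Fin N) ℂ := by
  unfold extS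
  split
  · exact SUN_coe_mem_unitary _
  · exact Submonoid.one_mem _

lemma extS_pert (e : ↥(edgeBox d L)) (X : Matrix (Fin N) (Fin N) ℂ) (t : ℝ)
    (Q : CfgS d L N) (f : EdgeZ d) :
    extS (pertS e X t Q) f
      = (if f = (e : EdgeZ d) then ((expSU (t • X) : SUN N) : Matrix (Fin N) (Fin N) ℂ) else 1)
        * extS Q f := by
  unfold extS pertS
  by_cases h : f ∈ edgeBox d L
  · rw [dif_pos h, dif_pos h, Function.update_apply]
    by_cases he : (⟨f, h⟩ : ↥(edgeBox d L)) = e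
    · have hf : f = (e : EdgeZ d) := by rw [← he]
      rw [if_pos he, if_pos hf, he]
      rfl
    · have hf : f ≠ (e : EdgeZ d) := fun hf' => he (Subtype.ext hf')
      rw [if_neg he, if_neg hf, one_mul]
  · rw [dif_neg h, dif_neg h]
    have hf : f ≠ (e : EdgeZ d) := fun hf' => h (hf' ▸ e.2)
    rw [if_neg hf, one_mul]

lemma pertS_zero (e : ↥(edgeBox d L)) (X : Matrix (Fin N) (Fin N) ℂ) (Q : CfgS d L N) :
    pertS e X 0 Q = Q := by
  unfold pertS
  rw [zero_smul, expSU_zero, one_mul, Function.update_eq_self]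

lemma card_pE1_le (f : EdgeZ d) : ((plaqBox d L).filter (fun p => pE1 d p = f)).card ≤ d := by
  have h : ((plaqBox d L).filter (fun p => pE1 d p = f)).card
      ≤ (Finset.univ : Finset (Fin d)).card := by
    apply Finset.card_le_card_of_injOn (fun p : PlaqZ d => p.2.2) (fun _ _ => Finset.mem_univ _)
    intro p hp q hq hpq
    simp only [Finset.coe_filter, Set.mem_setOf_eq] at hp hq
    have hp1 := Prod.ext_iff.mp hp.2
    have hq1 := Prod.ext_iff.mp hq.2
    exact Prod.ext_iff.mpr ⟨hp1.1.trans hq1.1.symm, Prod.ext_iff.mpr ⟨hp1.2.trans hq1.2.symm, hpq⟩⟩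
  simpa using h

lemma card_pE2_le (f : EdgeZ d) : ((plaqBox d L).filter (fun p => pE2 d p = f)).card ≤ d := by
  have h : ((plaqBox d L).filter (fun p => pE2 d p = f)).card
      ≤ (Finset.univ : Finset (Fin d)).card := by
    apply Finset.card_le_card_of_injOn (fun p : PlaqZ d => p.2.1) (fun _ _ => Finset.mem_univ _)
    intro p hp q hq hpq
    simp only [Finset.coe_filter, Set.mem_setOf_eq] at hp hq
    have hp1 := Prod.ext_iff.mp hp.2
    have hq1 := Prod.ext_iff.mp hq.2
    have h1 : p.1 + unitVec d p.2.1 = q.1 + unitVec d q.2.1 := hp1.1.trans hq1.1.symm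
    have hpq' : p.2.1 = q.2.1 := hpq
    rw [hpq'] at h1
    exact Prod.ext_iff.mpr ⟨add_right_cancel h1, Prod.ext_iff.mpr ⟨hpq', hp1.2.trans hq1.2.symm⟩⟩
  simpa using h

lemma card_pE3_le (f : EdgeZ d) : ((plaqBox d L).filter (fun p => pE3 d p = f)).card ≤ d := by
  have h : ((plaqBox d L).filter (fun p => pE3 d p = f)).card
      ≤ (Finset.univ : Finset (Fin d)).card := by
    apply Finset.card_le_card_of_injOn (fun p : PlaqZ d => p.2.2) (fun _ _ => Finset.mem_univ _)
    intro p hp q hq hpq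
    simp only [Finset.coe_filter, Set.mem_setOf_eq] at hp hq
    have hp1 := Prod.ext_iff.mp hp.2
    have hq1 := Prod.ext_iff.mp hq.2
    have h1 : p.1 + unitVec d p.2.2 = q.1 + unitVec d q.2.2 := hp1.1.trans hq1.1.symm
    have hpq' : p.2.2 = q.2.2 := hpq
    rw [hpq'] at h1
    exact Prod.ext_iff.mpr ⟨add_right_cancel h1, Prod.ext_iff.mpr ⟨hp1.2.trans hq1.2.symm, hpq'⟩⟩
  simpa using h

lemma card_pE4_le (f : EdgeZ d) : ((plaqBox d L).filter (fun p => pE4 d p = f)).card ≤ d := by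
  have h : ((plaqBox d L).filter (fun p => pE4 d p = f)).card
      ≤ (Finset.univ : Finset (Fin d)).card := by
    apply Finset.card_le_card_of_injOn (fun p : PlaqZ d => p.2.1) (fun _ _ => Finset.mem_univ _)
    intro p hp q hq hpq
    simp only [Finset.coe_filter, Set.mem_setOf_eq] at hp hq
    have hp1 := Prod.ext_iff.mp hp.2
    have hq1 := Prod.ext_iff.mp hq.2
    exact Prod.ext_iff.mpr ⟨hp1.1.trans hq1.1.symm, Prod.ext_iff.mpr ⟨hpq, hp1.2.trans hq1.2.symm⟩⟩
  simpa using h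

lemma sum_ind_le (f : EdgeZ d) :
    ∑ p ∈ plaqBox d L, ((if pE1 d p = f then (1:ℝ) else 0) + (if pE2 d p = f then 1 else 0)
      + (if pE3 d p = f then 1 else 0) + (if pE4 d p = f then 1 else 0)) ≤ 4 * d := by
  rw [Finset.sum_add_distrib, Finset.sum_add_distrib, Finset.sum_add_distrib]
  have h1 : ∑ p ∈ plaqBox d L, (if pE1 d p = f then (1:ℝ) else 0) ≤ d := by
    rw [Finset.sum_boole]; exact_mod_cast card_pE1_le f
  have h2 : ∑ p ∈ plaqBox d L, (if pE2 d p = f then (1:ℝ) else 0) ≤ d := by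
    rw [Finset.sum_boole]; exact_mod_cast card_pE2_le f
  have h3 : ∑ p ∈ plaqBox d L, (if pE3 d p = f then (1:ℝ) else 0) ≤ d := by
    rw [Finset.sum_boole]; exact_mod_cast card_pE3_le f
  have h4 : ∑ p ∈ plaqBox d L, (if pE4 d p = f then (1:ℝ) else 0) ≤ d := by
    rw [Finset.sum_boole]; exact_mod_cast card_pE4_le f
  linarith

lemma abs_exp_ITN (N : ℕ) (r : ℝ) :
    ‖Complex.exp (Complex.I * (r : ℂ) / (N : ℂ))‖ = 1 := by
  have h : Complex.I * (r : ℂ) / (N : ℂ) = ((r / N : ℝ) : ℂ) * Complex.I := by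
    push_cast; ring
  rw [h, Complex.norm_exp_ofReal_mul_I]

lemma actionC_pert_diff_le (β : ℝ) (hβ : 0 ≤ β) (e : ↥(edgeBox d L))
    (X : Matrix (Fin N) (Fin N) ℂ) (t : ℝ) (Q : CfgS d L N) (θ : CfgT d L) :
    |actionC d L N β θ (pertS e X t Q) - actionC d L N β θ Q|
      ≤ (N:ℝ) * β * (4 * d)
        * (‖((expSU (t • X) : SUN N) : Matrix (Fin N) (Fin N) ℂ) - 1‖ * Real.sqrt N) := by
  set E : Matrix (Fin N) (Fin N) ℂ := ((expSU (t • X) : SUN N) : Matrix (Fin N) (Fin N) ℂ)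
    with hEdef
  have hEu : E ∈ Matrix.unitaryGroup (Fin N) ℂ := SUN_coe_mem_unitary _
  set Y : ℝ := ‖E - 1‖ * Real.sqrt N with hYdef
  have hY0 : 0 ≤ Y := by positivity
  unfold actionC
  rw [← Finset.sum_sub_distrib]
  refine (Finset.abs_sum_le_sum_abs _ _).trans ?_
  have hper : ∀ p ∈ plaqBox d L,
      |(N:ℝ) * β * (Complex.exp (Complex.I * (thetaP θ p) / N)
          * (plaqMat (extS (pertS e X t Q)) p).trace).re
        - (N:ℝ) * β * (Complex.exp (Complex.I * (thetaP θ p) / N)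
          * (plaqMat (extS Q) p).trace).re|
      ≤ ((if pE1 d p = (e:EdgeZ d) then (1:ℝ) else 0) + (if pE2 d p = (e:EdgeZ d) then 1 else 0)
          + (if pE3 d p = (e:EdgeZ d) then 1 else 0) + (if pE4 d p = (e:EdgeZ d) then 1 else 0))
        * ((N:ℝ) * β * Y) := by
    intro p _
    rw [← mul_sub, abs_mul, _root_.abs_of_nonneg (show (0:ℝ) ≤ (N:ℝ)*β by positivity)]
    rw [show ((if pE1 d p = (e:EdgeZ d) then (1:ℝ) else 0)
          + (if pE2 d p = (e:EdgeZ d) then 1 else 0)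
          + (if pE3 d p = (e:EdgeZ d) then 1 else 0) + (if pE4 d p = (e:EdgeZ d) then 1 else 0))
        * ((N:ℝ) * β * Y)
      = (N:ℝ) * β * (((if pE1 d p = (e:EdgeZ d) then (1:ℝ) else 0)
          + (if pE2 d p = (e:EdgeZ d) then 1 else 0)
          + (if pE3 d p = (e:EdgeZ d) then 1 else 0)
          + (if pE4 d p = (e:EdgeZ d) then 1 else 0)) * Y) from by ring]
    refine mul_le_mul_of_nonneg_left ?_ (by positivity)
    rw [← Complex.sub_re, ← mul_sub]
    refine (Complex.abs_re_le_norm _).trans ?_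
    rw [norm_mul, abs_exp_ITN, one_mul]
    have hplaq : plaqMat (extS (pertS e X t Q)) p
        = ((if pE1 d p = (e:EdgeZ d) then E else 1) * extS Q (pE1 d p))
          * ((if pE2 d p = (e:EdgeZ d) then E else 1) * extS Q (pE2 d p))
          * ((if pE3 d p = (e:EdgeZ d) then E else 1) * extS Q (pE3 d p))ᴴ
          * ((if pE4 d p = (e:EdgeZ d) then E else 1) * extS Q (pE4 d p))ᴴ := by
      unfold plaqMat
      rw [extS_pert, extS_pert, extS_pert, extS_pert, Matrix.star_eq_conjTranspose,
        Matrix.star_eq_conjTranspose]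
    have hplaq0 : plaqMat (extS Q) p = extS Q (pE1 d p) * extS Q (pE2 d p)
        * (extS Q (pE3 d p))ᴴ * (extS Q (pE4 d p))ᴴ := by
      unfold plaqMat
      rw [Matrix.star_eq_conjTranspose, Matrix.star_eq_conjTranspose]
    rw [hplaq, hplaq0, hYdef]
    exact trace_plaq_pert_bound E _ _ _ _ hEu (extS_mem_unitary Q _) (extS_mem_unitary Q _)
      (extS_mem_unitary Q _) (extS_mem_unitary Q _) _ _ _ _
  refine (Finset.sum_le_sum hper).trans ?_
  rw [← Finset.sum_mul]
  calc (∑ p ∈ plaqBox d L, ((if pE1 d p = (e:EdgeZ d) then (1:ℝ) else 0)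
          + (if pE2 d p = (e:EdgeZ d) then 1 else 0)
          + (if pE3 d p = (e:EdgeZ d) then 1 else 0)
          + (if pE4 d p = (e:EdgeZ d) then 1 else 0))) * ((N:ℝ) * β * Y)
      ≤ (4 * d) * ((N:ℝ) * β * Y) :=
        mul_le_mul_of_nonneg_right (sum_ind_le _) (by positivity)
    _ = (N:ℝ) * β * (4 * d) * Y := by ring

lemma norm_X_le_one {X : Matrix (Fin N) (Fin N) ℂ} (hXn : Real.sqrt (frobSq X) ≤ 1) :
    ‖X‖ ≤ 1 := by
  rw [← sqrt_frobSq_eq_norm]; exact hXn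

lemma norm_expSU_tX_sub_one_le {X : Matrix (Fin N) (Fin N) ℂ}
    (hXn : Real.sqrt (frobSq X) ≤ 1) (t : ℝ) :
    ‖((expSU (t • X) : SUN N) : Matrix (Fin N) (Fin N) ℂ) - 1‖ ≤ |t| * Real.exp |t| := by
  refine (norm_expSU_sub_one_le _).trans ?_
  rw [norm_smul, Real.norm_eq_abs]
  have hX1 : ‖X‖ ≤ 1 := norm_X_le_one hXn
  have h5 : |t| * ‖X‖ ≤ |t| := by
    have := mul_le_mul_of_nonneg_left hX1 (abs_nonneg t)
    rwa [mul_one] at this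
  exact mul_le_mul h5 (Real.exp_le_exp.mpr h5) (Real.exp_nonneg _) (abs_nonneg t)

end Stmt14Aux2

section Stmt14Measure

variable {d L N : ℕ}

lemma isFiniteMeasure_lebTheta : IsFiniteMeasure (lebTheta d L) := by
  unfold lebTheta
  haveI : IsFiniteMeasure (volume.restrict (Set.Ico (0:ℝ) (2 * Real.pi))) :=
    ⟨by rw [Measure.restrict_apply_univ, Real.volume_Ico]; exact ENNReal.ofReal_lt_top⟩
  infer_instance

lemma lebTheta_univ_toReal_pos : 0 < ((lebTheta d L) Set.univ).toReal := by
  unfold lebTheta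
  rw [Measure.pi_univ]
  simp only [Measure.restrict_apply_univ, Real.volume_Ico, sub_zero]
  rw [Finset.prod_const]
  apply ENNReal.toReal_pos
  · apply pow_ne_zero
    rw [Ne, ENNReal.ofReal_eq_zero, not_le]
    positivity
  · exact ENNReal.pow_ne_top ENNReal.ofReal_ne_top

lemma continuous_extT (f : EdgeZ d) : Continuous fun θ : CfgT d L => extT θ f := by
  unfold extT
  by_cases h : f ∈ edgeBox d L
  · simp only [dif_pos h]; exact continuous_apply _
  · simp only [dif_neg h]; exact continuous_const

lemma continuous_actionC (β : ℝ) (Q' : CfgS d L N) :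
    Continuous fun θ : CfgT d L => actionC d L N β θ Q' := by
  unfold actionC
  apply continuous_finset_sum
  intro p _
  apply Continuous.mul continuous_const
  apply Complex.continuous_re.comp
  apply Continuous.mul ?_ continuous_const
  apply Complex.continuous_exp.comp
  apply Continuous.div_const
  apply Continuous.mul continuous_const
  apply Complex.continuous_ofReal.comp
  unfold thetaP
  exact continuous_finset_sum _ (fun f _ => continuous_const.mul (continuous_extT f))

lemma abs_actionC_le (β : ℝ) (hβ : 0 ≤ β) (Q' : CfgS d L N) (θ : CfgT d L) :
    |actionC d L N β θ Q'|
      ≤ ∑ p ∈ plaqBox d L, (N:ℝ) * β * ‖(plaqMat (extS Q') p).trace‖ := by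
  unfold actionC
  refine (Finset.abs_sum_le_sum_abs _ _).trans ?_
  refine Finset.sum_le_sum fun p _ => ?_
  rw [abs_mul, _root_.abs_of_nonneg (show (0:ℝ) ≤ (N:ℝ)*β by positivity)]
  refine mul_le_mul_of_nonneg_left ?_ (by positivity)
  refine (Complex.abs_re_le_norm _).trans ?_
  rw [norm_mul, abs_exp_ITN, one_mul]

lemma integrable_exp_actionC (β : ℝ) (hβ : 0 ≤ β) (Q' : CfgS d L N) :
    Integrable (fun θ => Real.exp (actionC d L N β θ Q')) (lebTheta d L) := by
  haveI := isFiniteMeasure_lebTheta (d := d) (L := L)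
  refine Integrable.mono' (integrable_const
    (Real.exp (∑ p ∈ plaqBox d L, (N:ℝ) * β * ‖(plaqMat (extS Q') p).trace‖))) ?_ ?_
  · exact (Real.continuous_exp.comp (continuous_actionC β Q')).aestronglyMeasurable
  · refine Filter.Eventually.of_forall fun θ => ?_
    rw [Real.norm_eq_abs, Real.abs_exp]
    exact Real.exp_le_exp.mpr ((le_abs_self _).trans (abs_actionC_le β hβ Q' θ))

lemma integral_exp_actionC_pos (β : ℝ) (hβ : 0 ≤ β) (Q' : CfgS d L N) :
    0 < ∫ θ, Real.exp (actionC d L N β θ Q') ∂(lebTheta d L) := by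
  haveI := isFiniteMeasure_lebTheta (d := d) (L := L)
  set M := ∑ p ∈ plaqBox d L, (N:ℝ) * β * ‖(plaqMat (extS Q') p).trace‖ with hM
  have hle : ∀ θ, Real.exp (-M) ≤ Real.exp (actionC d L N β θ Q') := fun θ =>
    Real.exp_le_exp.mpr (neg_le_of_abs_le (abs_actionC_le β hβ Q' θ))
  calc (0:ℝ) < ((lebTheta d L) Set.univ).toReal * Real.exp (-M) :=
        mul_pos lebTheta_univ_toReal_pos (Real.exp_pos _)
    _ = ∫ _θ, Real.exp (-M) ∂(lebTheta d L) := by rw [integral_const, smul_eq_mul]; rfl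
    _ ≤ ∫ θ, Real.exp (actionC d L N β θ Q') ∂(lebTheta d L) :=
        integral_mono (integrable_const _) (integrable_exp_actionC β hβ Q') hle

lemma log_integral_exp_le {α : Type*} [MeasurableSpace α] (μ : Measure α) (f g : α → ℝ)
    (hf : Integrable (fun x => Real.exp (f x)) μ) (hg : Integrable (fun x => Real.exp (g x)) μ)
    (hfp : 0 < ∫ x, Real.exp (f x) ∂μ) (hgp : 0 < ∫ x, Real.exp (g x) ∂μ)
    (c : ℝ) (hb : ∀ x, f x - g x ≤ c) :
    Real.log (∫ x, Real.exp (f x) ∂μ) ≤ c + Real.log (∫ x, Real.exp (g x) ∂μ) := by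
  have h1 : ∫ x, Real.exp (f x) ∂μ ≤ ∫ x, Real.exp c * Real.exp (g x) ∂μ := by
    refine integral_mono hf (hg.const_mul _) fun x => ?_
    rw [← Real.exp_add]
    exact Real.exp_le_exp.mpr (by linarith [hb x])
  rw [integral_const_mul] at h1
  calc Real.log (∫ x, Real.exp (f x) ∂μ)
      ≤ Real.log (Real.exp c * ∫ x, Real.exp (g x) ∂μ) := Real.log_le_log hfp h1
    _ = c + Real.log (∫ x, Real.exp (g x) ∂μ) := by
        rw [Real.log_mul (Real.exp_ne_zero c) (ne_of_gt hgp), Real.log_exp]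

lemma abs_log_integral_exp_sub_le {α : Type*} [MeasurableSpace α] (μ : Measure α)
    (f g : α → ℝ)
    (hf : Integrable (fun x => Real.exp (f x)) μ) (hg : Integrable (fun x => Real.exp (g x)) μ)
    (hfp : 0 < ∫ x, Real.exp (f x) ∂μ) (hgp : 0 < ∫ x, Real.exp (g x) ∂μ)
    (c : ℝ) (hb : ∀ x, |f x - g x| ≤ c) :
    |Real.log (∫ x, Real.exp (f x) ∂μ) - Real.log (∫ x, Real.exp (g x) ∂μ)| ≤ c := by
  have h1 := log_integral_exp_le μ f g hf hg hfp hgp c (fun x => (abs_le.mp (hb x)).2)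
  have h2 := log_integral_exp_le μ g f hg hf hgp hfp c
    (fun x => by linarith [(abs_le.mp (hb x)).1])
  rw [abs_sub_le_iff]
  constructor <;> linarith

lemma abs_deriv_le_of_lip {f : ℝ → ℝ} {K : ℝ} (hK : 0 ≤ K)
    (h : ∀ t, |f t - f 0| ≤ K * (|t| * Real.exp |t|)) : |deriv f 0| ≤ K := by
  by_cases hd : DifferentiableAt ℝ f 0
  · have h1 : Filter.Tendsto (slope f 0) (nhdsWithin 0 {(0:ℝ)}ᶜ) (nhds (deriv f 0)) :=
      hasDerivAt_iff_tendsto_slope.mp hd.hasDerivAt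
    have h2 : Filter.Tendsto (fun t => |slope f 0 t|) (nhdsWithin 0 {(0:ℝ)}ᶜ)
        (nhds |deriv f 0|) := h1.abs
    have h3 : Filter.Tendsto (fun t : ℝ => K * Real.exp |t|) (nhdsWithin 0 {(0:ℝ)}ᶜ)
        (nhds (K * Real.exp |(0:ℝ)|)) :=
      ((continuous_const.mul (Real.continuous_exp.comp _root_.continuous_abs)).tendsto 0).mono_left
        nhdsWithin_le_nhds
    have h4 : K * Real.exp |(0:ℝ)| = K := by simp
    rw [h4] at h3
    refine le_of_tendsto_of_tendsto h2 h3 ?_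
    filter_upwards [self_mem_nhdsWithin] with t ht
    have ht0 : t ≠ 0 := ht
    have hs : |slope f 0 t| = |f t - f 0| / |t| := by
      rw [slope_def_field, abs_div, sub_zero]
    rw [hs, div_le_iff₀ (abs_pos.mpr ht0)]
    calc |f t - f 0| ≤ K * (|t| * Real.exp |t|) := h t
      _ = K * Real.exp |t| * |t| := by ring
  · rw [deriv_zero_of_not_differentiableAt hd, abs_zero]; exact hK

end Stmt14Measure

section Stmt14Lip

attribute [local instance] Matrix.frobeniusSeminormedAddCommGroup
  Matrix.frobeniusNormedAddCommGroup Matrix.frobeniusNormedSpace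
  Matrix.frobeniusNormedRing Matrix.frobeniusNormedAlgebra

lemma actionTilde_lip {d L N : ℕ} (β : ℝ) (hβn : 0 ≤ β) (e : ↥(edgeBox d L))
    (X : Matrix (Fin N) (Fin N) ℂ) (hXn : Real.sqrt (frobSq X) ≤ 1)
    (Q : CfgS d L N) (t : ℝ) :
    |actionTilde d L N β (pertS e X t Q) - actionTilde d L N β Q|
      ≤ ((N:ℝ) * β * (4 * d) * Real.sqrt N) * (|t| * Real.exp |t|) := by
  unfold actionTilde
  have h1 := abs_log_integral_exp_sub_le (lebTheta d L)
    (fun θ => actionC d L N β θ (pertS e X t Q)) (fun θ => actionC d L N β θ Q)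
    (integrable_exp_actionC β hβn _) (integrable_exp_actionC β hβn _)
    (integral_exp_actionC_pos β hβn _) (integral_exp_actionC_pos β hβn _)
    ((N:ℝ) * β * (4 * d)
      * (‖((expSU (t • X) : SUN N) : Matrix (Fin N) (Fin N) ℂ) - 1‖ * Real.sqrt N))
    (fun θ => actionC_pert_diff_le β hβn e X t Q θ)
  refine h1.trans ?_
  have h2 := norm_expSU_tX_sub_one_le (N := N) hXn t
  calc (N:ℝ) * β * (4 * d)
      * (‖((expSU (t • X) : SUN N) : Matrix (Fin N) (Fin N) ℂ) - 1‖ * Real.sqrt N)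
      ≤ (N:ℝ) * β * (4 * d) * ((|t| * Real.exp |t|) * Real.sqrt N) := by
        have hnn : (0:ℝ) ≤ (N:ℝ) * β * (4 * d) := by positivity
        refine mul_le_mul_of_nonneg_left ?_ hnn
        exact mul_le_mul_of_nonneg_right h2 (Real.sqrt_nonneg _)
    _ = ((N:ℝ) * β * (4 * d) * Real.sqrt N) * (|t| * Real.exp |t|) := by ring

end Stmt14Lip

lemma four_d_le_pow (d : ℕ) (hd : 1 ≤ d) : 4 * d ≤ 10 ^ (6 * d) := by
  have h1 : d < 2 ^ d := Nat.lt_two_pow_self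
  have h2 : 4 * d ≤ 4 * 2 ^ d := by omega
  have h3 : 4 * 2 ^ d = 2 ^ (d + 2) := by ring
  have h4 : 2 ^ (d + 2) ≤ 10 ^ (d + 2) := Nat.pow_le_pow_left (by norm_num) _
  have h5 : 10 ^ (d + 2) ≤ 10 ^ (6 * d) := Nat.pow_le_pow_right (by norm_num) (by omega)
  omega

/-- Gradient bound for the marginal action.  For `d ≥ 2`, `N ≥ 2`,
`L ≥ 1` and `0 < β ≤ 10^{−6d}`: for every edge `e`, every configuration `Q` and every
`X ∈ su(N)` with `|X|_F ≤ 1`, `|(d/dt)|₀ S̃(Q^{e,t,X})| ≤ N^{3/2}`; equivalently,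
`|∇_e S̃(Q)| ≤ N^{3/2}`. -/
theorem stmt14 (d N L : ℕ) (hd : 2 ≤ d) (hN : 2 ≤ N) (hL : 1 ≤ L)
    (β : ℝ) (hβ0 : 0 < β) (hβ : β ≤ (10 : ℝ) ^ (-(6 : ℤ) * d))
    (e : ↥(edgeBox d L)) (Q : CfgS d L N)
    (X : Matrix (Fin N) (Fin N) ℂ) (hX : MemSU X) (hXn : Real.sqrt (frobSq X) ≤ 1) :
    |deriv (fun t : ℝ => actionTilde d L N β (pertS e X t Q)) 0|
      ≤ (N : ℝ) ^ ((3 : ℝ) / 2) := by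
  have hβn : (0:ℝ) ≤ β := le_of_lt hβ0
  set K : ℝ := (N:ℝ) * β * (4 * d) * Real.sqrt N with hK
  have hlip : ∀ t : ℝ, |actionTilde d L N β (pertS e X t Q)
      - actionTilde d L N β (pertS e X 0 Q)| ≤ K * (|t| * Real.exp |t|) := by
    intro t
    rw [pertS_zero]
    exact actionTilde_lip β hβn e X hXn Q t
  have habs : |deriv (fun t : ℝ => actionTilde d L N β (pertS e X t Q)) 0| ≤ K :=
    abs_deriv_le_of_lip (by positivity) hlip
  refine habs.trans ?_
  have hNpos : (0:ℝ) < N := by positivity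
  have hrw : (N:ℝ) ^ ((3:ℝ)/2) = (N:ℝ) * Real.sqrt N := by
    rw [show (3:ℝ)/2 = 1 + 1/2 by norm_num, Real.rpow_add hNpos, Real.rpow_one,
      ← Real.sqrt_eq_rpow]
  rw [hrw]
  have hd10 : (4 * (d:ℝ)) ≤ (10:ℝ) ^ (6 * d) := by
    exact_mod_cast four_d_le_pow d (by omega)
  have hβ' : β ≤ ((10:ℝ) ^ (6 * d))⁻¹ := by
    rwa [show (-(6:ℤ) * d) = -((6 * d : ℕ) : ℤ) by push_cast; ring, _root_.zpow_neg, zpow_natCast] at hβ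
  have hp : (0:ℝ) < (10:ℝ) ^ (6 * d) := by positivity
  have h4d : (4 * (d:ℝ)) * β ≤ 1 := by
    calc (4 * (d:ℝ)) * β ≤ (10:ℝ) ^ (6 * d) * ((10:ℝ) ^ (6 * d))⁻¹ :=
          mul_le_mul hd10 hβ' hβn (le_of_lt hp)
      _ = 1 := mul_inv_cancel₀ (ne_of_gt hp)
  calc K = ((4 * d) * β) * ((N:ℝ) * Real.sqrt N) := by rw [hK]; ring
    _ ≤ 1 * ((N:ℝ) * Real.sqrt N) :=
        mul_le_mul_of_nonneg_right h4d (by positivity)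
    _ = (N:ℝ) * Real.sqrt N := one_mul _

end YM
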